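/- arXiv:1808.02325 — 3 statements merged into one kernel-verified Lean document; each statement's English description precedes it below -/
import Mathlib

section
/- Let Y be a δ-hyperbolic geodesic metric space and let P₁, …, P_k be subsets of Y such that each P_i is ε-quasi-convex and P_i ∩ P_{i+1} ≠ ∅ for each 1 ≤ i < k. Then the union P = P₁ ∪ ⋯ ∪ P_k is ρ-quasi-convex, where ρ = δ(log₂(k) + 1) + ε. -/
/-- A geodesic from `x` to `y`, parametrized by arclength on `[0, dist x y]`. -/
def IsGeodesicFrom {X : Type*} [MetricSpace X] (γ : ℝ → X) (x y : X) : Prop :=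
  γ 0 = x ∧ γ (dist x y) = y ∧
    ∀ s ∈ Set.Icc (0:ℝ) (dist x y), ∀ t ∈ Set.Icc (0:ℝ) (dist x y),
      dist (γ s) (γ t) = |s - t|

/-- The image of a geodesic segment. -/
def geodSeg {X : Type*} [MetricSpace X] (γ : ℝ → X) (x y : X) : Set X :=
  γ '' Set.Icc (0:ℝ) (dist x y)

/-- A geodesic metric space: any two points are joined by a geodesic. -/
def GeodesicSpace (X : Type*) [MetricSpace X] : Prop :=
  ∀ x y : X, ∃ γ : ℝ → X, IsGeodesicFrom γ x y

/-- `δ`-hyperbolicity via thin triangles: each side of a geodesic triangle is contained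
in the `δ`-neighborhood of the union of the other two sides. -/
def DeltaHyperbolic (X : Type*) [MetricSpace X] (δ : ℝ) : Prop :=
  ∀ (x y z : X) (γ₁ γ₂ γ₃ : ℝ → X),
    IsGeodesicFrom γ₁ x y → IsGeodesicFrom γ₂ y z → IsGeodesicFrom γ₃ x z →
    ∀ p ∈ geodSeg γ₃ x z, ∃ q ∈ geodSeg γ₁ x y ∪ geodSeg γ₂ y z, dist p q ≤ δ

/-- A subset `P` is `ε`-quasi-convex if every geodesic with endpoints in `P`
lies in the `ε`-neighborhood of `P`. -/
def QuasiConvexSet {X : Type*} [MetricSpace X] (ε : ℝ) (P : Set X) : Prop :=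
  ∀ x ∈ P, ∀ y ∈ P, ∀ γ : ℝ → X, IsGeodesicFrom γ x y →
    ∀ p ∈ geodSeg γ x y, ∃ q ∈ P, dist p q ≤ ε

lemma chain_key {Y : Type*} [MetricSpace Y] (δ ε : ℝ) (hδ : 0 ≤ δ)
    (hgeo : GeodesicSpace Y) (hhyp : DeltaHyperbolic Y δ)
    (k : ℕ) (P : Fin k → Set Y)
    (hqc : ∀ i, QuasiConvexSet ε (P i))
    (hchain : ∀ (i : ℕ) (hi : i + 1 < k),
      (P ⟨i, Nat.lt_of_succ_lt hi⟩ ∩ P ⟨i + 1, hi⟩).Nonempty) :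
    ∀ n i j : ℕ, ∀ (hi : i < k) (hj : j < k), i ≤ j → j - i + 1 = n →
      ∀ x ∈ P ⟨i, hi⟩, ∀ y ∈ P ⟨j, hj⟩, ∀ γ : ℝ → Y, IsGeodesicFrom γ x y →
      ∀ p ∈ geodSeg γ x y,
        ∃ q ∈ ⋃ t, P t, dist p q ≤ δ * (Nat.clog 2 n : ℝ) + ε := by
  intro n
  induction n using Nat.strong_induction_on with
  | _ n IH =>
    intro i j hi hj hij hn x hx y hy γ hγ p hp
    rcases Nat.lt_or_ge n 2 with hn2 | hn2
    · -- n = 1, so i = j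
      have hij' : i = j := by omega
      subst hij'
      obtain ⟨q, hq, hdq⟩ := hqc ⟨i, hi⟩ x hx y hy γ hγ p hp
      refine ⟨q, Set.mem_iUnion.2 ⟨⟨i, hi⟩, hq⟩, ?_⟩
      have : n = 1 := by omega
      simp [this]
      linarith
    · -- n ≥ 2 : split the chain
      set a := (n + 1) / 2 with ha
      have ha1 : 1 ≤ a := by omega
      have han : a < n := by omega
      have hna : 1 ≤ n - a ∧ n - a ≤ a := by omega
      set m := i + a - 1 with hm
      have him : i ≤ m := by omega
      have hmj : m + 1 ≤ j := by omega
      have hm1k : m + 1 < k := by omega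
      have hmk : m < k := by omega
      obtain ⟨z, hz1, hz2⟩ := hchain m hm1k
      obtain ⟨g1, hg1⟩ := hgeo x z
      obtain ⟨g2, hg2⟩ := hgeo z y
      obtain ⟨q, hq, hdq⟩ := hhyp x z y g1 g2 γ hg1 hg2 hγ p hp
      -- clog relations
      have hclog : Nat.clog 2 n = Nat.clog 2 a + 1 := by
        rw [Nat.clog_of_two_le one_lt_two hn2]
        congr 2
      have hclog2 : Nat.clog 2 (n - a) ≤ Nat.clog 2 a :=
        Nat.clog_mono_right 2 hna.2
      rcases hq with hq | hq
      · -- q on [x, z], chain from i to m, length a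
        obtain ⟨r, hr, hdr⟩ := IH a han i m hi hmk him (by omega) x hx z hz1 g1 hg1 q hq
        refine ⟨r, hr, ?_⟩
        have := dist_triangle p q r
        have hcast : (Nat.clog 2 n : ℝ) = (Nat.clog 2 a : ℝ) + 1 := by
          rw [hclog]; push_cast; ring
        rw [hcast]
        nlinarith [dist_nonneg (x := p) (y := q)]
      · -- q on [z, y], chain from m+1 to j, length n - a
        obtain ⟨r, hr, hdr⟩ := IH (n - a) (by omega) (m + 1) j hm1k hj hmj (by omega)
          z hz2 y hy g2 hg2 q hq
        refine ⟨r, hr, ?_⟩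
        have := dist_triangle p q r
        have hle : (Nat.clog 2 (n - a) : ℝ) ≤ (Nat.clog 2 a : ℝ) := by
          exact_mod_cast hclog2
        have hcast : (Nat.clog 2 a : ℝ) + 1 = (Nat.clog 2 n : ℝ) := by
          rw [hclog]; push_cast; ring
        nlinarith

/-- A union of a chain of `k` `ε`-quasi-convex sets, consecutive ones intersecting,
is `ρ`-quasi-convex with `ρ = δ(log₂ k + 1) + ε`. -/
theorem union_of_chain_quasiconvex
    {Y : Type*} [MetricSpace Y] (δ ε : ℝ) (hδ : 0 ≤ δ) (hε : 0 ≤ ε)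
    (hgeo : GeodesicSpace Y) (hhyp : DeltaHyperbolic Y δ)
    (k : ℕ) (hk : 0 < k) (P : Fin k → Set Y)
    (hqc : ∀ i, QuasiConvexSet ε (P i))
    (hchain : ∀ (i : ℕ) (hi : i + 1 < k),
      (P ⟨i, Nat.lt_of_succ_lt hi⟩ ∩ P ⟨i + 1, hi⟩).Nonempty) :
    QuasiConvexSet (δ * (Real.logb 2 (k : ℝ) + 1) + ε) (⋃ i, P i) := by
  intro x hx y hy γ hγ p hp
  obtain ⟨i, hxi⟩ := Set.mem_iUnion.1 hx
  obtain ⟨j, hyj⟩ := Set.mem_iUnion.1 hy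
  -- wlog i ≤ j by using the reversed geodesic if needed; handle both cases via
  -- a symmetric helper application.
  have key : ∀ (i j : Fin k) (x : Y), x ∈ P i → ∀ (y : Y), y ∈ P j → (i : ℕ) ≤ j →
      ∀ γ : ℝ → Y, IsGeodesicFrom γ x y → ∀ p ∈ geodSeg γ x y,
      ∃ q ∈ ⋃ t, P t, dist p q ≤ δ * (Real.logb 2 (k : ℝ) + 1) + ε := by
    intro i j x hxi y hyj hij γ hγ p hp
    obtain ⟨q, hq, hdq⟩ := chain_key δ ε hδ hgeo hhyp k P hqc hchain
      ((j : ℕ) - i + 1) i j i.2 j.2 hij rfl x hxi y hyj γ hγ p hp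
    refine ⟨q, hq, hdq.trans ?_⟩
    have hmul : (Nat.clog 2 ((j : ℕ) - i + 1) : ℝ) ≤ Real.logb 2 (k : ℝ) + 1 := by
      set n := (j : ℕ) - (i : ℕ) + 1 with hn
      have hnk : n ≤ k := by have := j.2; omega
      have hle : Nat.clog 2 n ≤ Nat.clog 2 k := Nat.clog_mono_right 2 hnk
      rcases Nat.lt_or_ge k 2 with hk2 | hk2
      · have hk1 : k = 1 := by omega
        have : Nat.clog 2 n ≤ Nat.clog 2 1 := hle.trans (by rw [hk1])
        simp [Nat.clog_one_right] at this
        rw [hk1]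
        simp [this]
      · -- k ≥ 2: 2^(clog 2 k - 1) < k
        set c := Nat.clog 2 k with hc
        have hcpos : 0 < c := Nat.clog_pos one_lt_two hk2
        have hpow : 2 ^ (c - 1) < k := Nat.pow_pred_clog_lt_self one_lt_two hk2
        have hpowR : ((2 : ℝ)) ^ (c - 1) ≤ (k : ℝ) := by
          exact_mod_cast hpow.le
        have hlogle : ((c - 1 : ℕ) : ℝ) ≤ Real.logb 2 (k : ℝ) := by
          have h2 : Real.logb 2 ((2 : ℝ) ^ (c - 1)) = ((c - 1 : ℕ) : ℝ) := by
            rw [Real.logb_pow]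
            simp [Real.logb_self_eq_one]
          rw [← h2]
          exact Real.logb_le_logb_of_le one_lt_two (by positivity) hpowR
        have hcR : (Nat.clog 2 n : ℝ) ≤ (c : ℝ) := by exact_mod_cast hle
        have : (c : ℝ) = ((c - 1 : ℕ) : ℝ) + 1 := by
          have : c - 1 + 1 = c := by omega
          exact_mod_cast (congrArg (Nat.cast (R := ℝ)) this).symm
        linarith
    nlinarith
  rcases le_or_gt (i : ℕ) (j : ℕ) with hij | hij
  · exact key i j x hxi y hyj hij γ hγ p hp
  · -- reverse: use the geodesic from y to x
    obtain ⟨hx0, hy0, hrest⟩ := hγ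
    have hd : dist y x = dist x y := dist_comm y x
    set γ' : ℝ → Y := fun t => γ (dist x y - t) with hγ'
    have hγ'geo : IsGeodesicFrom γ' y x := by
      refine ⟨by simp [hγ', hd, hy0], by simp [hγ', hd, hx0], ?_⟩
      intro s hs t ht
      rw [hd] at hs ht
      have h1 : dist x y - s ∈ Set.Icc (0:ℝ) (dist x y) := by
        constructor <;> [linarith [hs.2]; linarith [hs.1]]
      have h2 : dist x y - t ∈ Set.Icc (0:ℝ) (dist x y) := by
        constructor <;> [linarith [ht.2]; linarith [ht.1]]
      rw [hγ']
      rw [hrest _ h1 _ h2]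
      rw [abs_sub_comm]
      ring_nf
    have hp' : p ∈ geodSeg γ' y x := by
      obtain ⟨t, ht, hpt⟩ := hp
      refine ⟨dist x y - t, ?_, ?_⟩
      · rw [hd]; exact ⟨by linarith [ht.2], by linarith [ht.1]⟩
      · simp [hγ', hpt]
    exact key j i y hyj x hxi (le_of_lt hij) γ' hγ'geo p hp'
end

section
/- Suppose X and Y are geodesic metric spaces, A ⊆ X is strongly quasi-convex, φ : X → Y is a quasi-isometry, and B ⊆ Y lies at finite Hausdorff distance from φ(A). Then B is a strongly quasi-convex subset of Y. -/
/-- A `(K,C)`-quasi-geodesic defined on `[0, a]`. -/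
def IsQuasiGeodesicOn {X : Type*} [MetricSpace X] (K C : ℝ) (c : ℝ → X) (a : ℝ) : Prop :=
  ∀ s ∈ Set.Icc (0:ℝ) a, ∀ t ∈ Set.Icc (0:ℝ) a,
    (1 / K) * |s - t| - C ≤ dist (c s) (c t) ∧ dist (c s) (c t) ≤ K * |s - t| + C

/-- `Q` is strongly quasi-convex: for each `K ≥ 1`, `C ≥ 0` there is `M` so that every
`(K,C)`-quasi-geodesic with endpoints in `Q` lies in the `M`-neighborhood of `Q`. -/
def StronglyQCSet {X : Type*} [MetricSpace X] (Q : Set X) : Prop :=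
  ∀ K C : ℝ, 1 ≤ K → 0 ≤ C → ∃ M : ℝ,
    ∀ (c : ℝ → X) (a : ℝ), 0 ≤ a → IsQuasiGeodesicOn K C c a →
      c 0 ∈ Q → c a ∈ Q → ∀ s ∈ Set.Icc (0:ℝ) a, ∃ q ∈ Q, dist (c s) q ≤ M

/-!
Transport a `(K, C)`-quasi-geodesic `c` in `Y` with endpoints in `B` back to `X` pointwise: at each
time pick `x` with `φ x` uniformly close to `c t`, taking `x ∈ A` whenever `c t ∈ B`. The resulting
path is again a quasi-geodesic, with constants depending only on `K, C, λ, ε, Dh`, and has its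
endpoints in `A`, hence stays uniformly close to `A`; pushing it forward by `φ` and moving from
`φ(A)` to `B` bounds the distance from `c` to `B`.
-/

namespace IsQuasiGeodesicOn

variable {X Y : Type*} [MetricSpace X] [MetricSpace Y]

theorem of_dist_le {K C E a : ℝ} {c c' : ℝ → X} (hc : IsQuasiGeodesicOn K C c a)
    (hcc' : ∀ t ∈ Set.Icc (0:ℝ) a, dist (c t) (c' t) ≤ E) :
    IsQuasiGeodesicOn K (C + 2 * E) c' a := by
  intro u hu v hv
  obtain ⟨hlow, hhigh⟩ := hc u hu v hv
  have hu' := hcc' u hu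
  have hv' := hcc' v hv
  have hle := dist_triangle4 (c' u) (c u) (c v) (c' v)
  have hge := dist_triangle4 (c u) (c' u) (c' v) (c v)
  rw [dist_comm (c' u) (c u)] at hle
  rw [dist_comm (c' v) (c v)] at hge
  constructor <;> linarith

theorem of_comp {K C lam eps a : ℝ} {φ : X → Y} {c : ℝ → X}
    (hφ_lower : ∀ x x' : X, lam⁻¹ * dist x x' - eps ≤ dist (φ x) (φ x'))
    (hφ_upper : ∀ x x' : X, dist (φ x) (φ x') ≤ lam * dist x x' + eps)
    (hlam : 1 ≤ lam) (hCeps : 0 ≤ C + eps) (hc : IsQuasiGeodesicOn K C (φ ∘ c) a) :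
    IsQuasiGeodesicOn (lam * K) (lam * (C + eps)) c a := by
  intro u hu v hv
  obtain ⟨hlow, hhigh⟩ := hc u hu v hv
  simp only [Function.comp_apply] at hlow hhigh
  have hlam0 : 0 < lam := one_pos.trans_le hlam
  constructor
  · have hdist : lam⁻¹ * (1 / K * |u - v| - (C + eps)) ≤ dist (c u) (c v) := by
      rw [inv_mul_le_iff₀ hlam0]
      linarith [hφ_upper (c u) (c v)]
    have hshrink : lam⁻¹ * (C + eps) ≤ lam * (C + eps) :=
      mul_le_mul_of_nonneg_right ((inv_le_one_of_one_le₀ hlam).trans hlam) hCeps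
    have hinv : 1 / (lam * K) = lam⁻¹ * (1 / K) := by rw [one_div, one_div, mul_inv]
    rw [hinv, mul_assoc]
    linarith [mul_sub lam⁻¹ (1 / K * |u - v|) (C + eps)]
  · have hdist : lam⁻¹ * dist (c u) (c v) ≤ K * |u - v| + (C + eps) := by
      linarith [hφ_lower (c u) (c v)]
    rw [inv_mul_le_iff₀ hlam0] at hdist
    linarith

end IsQuasiGeodesicOn

theorem exists_lift_near_image {ι X Y : Type*} [MetricSpace X] [MetricSpace Y] {φ : X → Y}
    {A : Set X} {B : Set Y} {eps Dh : ℝ} (hφ_dense : ∀ y : Y, ∃ x : X, dist y (φ x) ≤ eps)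
    (hBA : ∀ b ∈ B, ∃ a ∈ A, dist b (φ a) ≤ Dh) (c : ι → Y) :
    ∃ c' : ι → X, ∀ t, dist (c t) (φ (c' t)) ≤ max eps Dh ∧ (c t ∈ B → c' t ∈ A) := by
  classical
  have hlift : ∀ t, ∃ x, dist (c t) (φ x) ≤ max eps Dh ∧ (c t ∈ B → x ∈ A) := fun t => by
    by_cases hB : c t ∈ B
    · obtain ⟨x, hxA, hx⟩ := hBA _ hB
      exact ⟨x, hx.trans (le_max_right _ _), fun _ => hxA⟩
    · obtain ⟨x, hx⟩ := hφ_dense (c t)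
      exact ⟨x, hx.trans (le_max_left _ _), fun h => absurd h hB⟩
  exact ⟨fun t => (hlift t).choose, fun t => (hlift t).choose_spec⟩

theorem strongly_qc_invariant_under_qi_general
    {X Y : Type*} [MetricSpace X] [MetricSpace Y]
    (A : Set X) (hA : StronglyQCSet A)
    (φ : X → Y) (lam eps : ℝ) (hlam : 1 ≤ lam) (heps : 0 ≤ eps)
    (hqi_lower : ∀ x x' : X, lam⁻¹ * dist x x' - eps ≤ dist (φ x) (φ x'))
    (hqi_upper : ∀ x x' : X, dist (φ x) (φ x') ≤ lam * dist x x' + eps)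
    (hqi_dense : ∀ y : Y, ∃ x : X, dist y (φ x) ≤ eps)
    (B : Set Y) (Dh : ℝ)
    (hBA : ∀ b ∈ B, ∃ a ∈ A, dist b (φ a) ≤ Dh)
    (hAB : ∀ a ∈ A, ∃ b ∈ B, dist (φ a) b ≤ Dh) :
    StronglyQCSet B := by
  intro K C hK hC
  set E := max eps Dh
  have hE : 0 ≤ E := heps.trans (le_max_left _ _)
  have hC' : 0 ≤ C + 2 * E + eps := by linarith
  obtain ⟨M, hM⟩ := hA (lam * K) (lam * (C + 2 * E + eps))
    (one_le_mul_of_one_le_of_one_le hlam hK) (mul_nonneg (by linarith) hC')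
  refine ⟨E + (lam * M + eps) + Dh, fun c a ha hc hc0 hca s hs => ?_⟩
  obtain ⟨c', hc'⟩ := exists_lift_near_image hqi_dense hBA c
  have hc'_qg : IsQuasiGeodesicOn (lam * K) (lam * (C + 2 * E + eps)) c' a :=
    (hc.of_dist_le fun t _ => (hc' t).1).of_comp hqi_lower hqi_upper hlam hC'
  obtain ⟨q, hqA, hq⟩ := hM c' a ha hc'_qg ((hc' 0).2 hc0) ((hc' a).2 hca) s hs
  obtain ⟨b, hbB, hb⟩ := hAB q hqA
  refine ⟨b, hbB, ?_⟩
  calc dist (c s) b ≤ dist (c s) (φ (c' s)) + dist (φ (c' s)) (φ q) + dist (φ q) b :=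
        dist_triangle4 _ _ _ _
    _ ≤ E + (lam * M + eps) + Dh := by
        gcongr
        · exact (hc' s).1
        · exact (hqi_upper _ _).trans (by gcongr)

/-- Strong quasi-convexity is preserved by quasi-isometries: if `A ⊆ X` is strongly
quasi-convex, `φ : X → Y` is a quasi-isometry, and `B ⊆ Y` is at finite Hausdorff distance
from `φ(A)`, then `B` is strongly quasi-convex in `Y`. -/
theorem strongly_qc_invariant_under_qi
    {X Y : Type*} [MetricSpace X] [MetricSpace Y]
    (hX : GeodesicSpace X) (hY : GeodesicSpace Y)
    (A : Set X) (hA : StronglyQCSet A)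
    (φ : X → Y) (lam eps : ℝ) (hlam : 1 ≤ lam) (heps : 0 ≤ eps)
    (hqi_lower : ∀ x x' : X, lam⁻¹ * dist x x' - eps ≤ dist (φ x) (φ x'))
    (hqi_upper : ∀ x x' : X, dist (φ x) (φ x') ≤ lam * dist x x' + eps)
    (hqi_dense : ∀ y : Y, ∃ x : X, dist y (φ x) ≤ eps)
    (B : Set Y) (Dh : ℝ)
    (hBA : ∀ b ∈ B, ∃ a ∈ A, dist b (φ a) ≤ Dh)
    (hAB : ∀ a ∈ A, ∃ b ∈ B, dist (φ a) b ≤ Dh) :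
    StronglyQCSet B :=
  strongly_qc_invariant_under_qi_general A hA φ lam eps hlam heps hqi_lower hqi_upper hqi_dense B Dh
    hBA hAB
end

section
/- Let Υ be a δ-hyperbolic geodesic space and m, ε > 0, c ≥ 0. There exists ε′ (depending only on δ, m, ε, c) so that for any finite or countable collection of subsets {X_i}_{i=1}^Λ of Υ satisfying (1) each X_i is ε-quasi-convex, (2) X_i ∩ X_{i+1} ≠ ∅ for each i, and (3) for all i, j and all x ∈ X_i, y ∈ X_j one has d(x,y) ≥ m(|i − j| − c), the union ⋃_i X_i is ε′-quasi-convex. In particular ε′ does not depend on Λ. -/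
open Set Metric Filter Asymptotics

theorem Nat.size_div_two_lt {n : ℕ} (hn : n ≠ 0) : Nat.size (n / 2) < Nat.size n := by
  obtain ⟨k, hk⟩ : ∃ k, Nat.size n = k + 1 :=
    Nat.exists_eq_add_one.2 (Nat.size_pos.2 (Nat.pos_of_ne_zero hn))
  have hlt : n < 2 ^ (k + 1) := hk ▸ Nat.lt_size_self n
  have : Nat.size (n / 2) ≤ k := Nat.size_le.2 (by rw [Nat.pow_succ] at hlt; omega)
  omega

theorem Nat.two_pow_size_le (n : ℕ) : 2 ^ Nat.size n ≤ 2 * n + 1 := by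
  rcases Nat.eq_zero_or_pos n with rfl | hn
  · simp
  · obtain ⟨k, hk⟩ : ∃ k, Nat.size n = k + 1 := Nat.exists_eq_add_one.2 (Nat.size_pos.2 hn)
    have : 2 ^ k ≤ n := Nat.lt_size.1 (by omega)
    rw [hk, Nat.pow_succ]
    omega

theorem eventually_lt_two_pow (a b : ℝ) : ∀ᶠ n : ℕ in atTop, a * n + b < 2 ^ n := by
  have ho : (fun n : ℕ => a * n + b) =o[atTop] fun n => (2 : ℝ) ^ n :=
    ((isLittleO_coe_const_pow_of_one_lt (R := ℝ) one_lt_two).const_mul_left a).add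
      (isLittleO_const_left.2 <| .inr <| by
        simpa [Function.comp_def] using tendsto_pow_atTop_atTop_of_one_lt (one_lt_two (α := ℝ)))
  filter_upwards [ho.def (one_half_pos (α := ℝ))] with n hn
  have hpow : (0 : ℝ) < 2 ^ n := by positivity
  rw [Real.norm_eq_abs, Real.norm_of_nonneg hpow.le] at hn
  linarith [le_abs_self (a * n + b)]

theorem exists_bound_of_le_add_mul_size {A B C D : ℝ} (hB : 0 ≤ B) (hD : 0 ≤ D) :
    ∃ K, ∀ (S : ℝ) (G : ℕ), (G : ℝ) ≤ B * S + C → S ≤ A + D * Nat.size G → S ≤ K := by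
  obtain ⟨N, hN⟩ := eventually_atTop.1 (eventually_lt_two_pow (2 * B * D) (2 * B * A + 2 * C + 1))
  refine ⟨A + D * N, fun S G hG hS => ?_⟩
  by_cases hL : Nat.size G ≤ N
  · calc S ≤ A + D * Nat.size G := hS
      _ ≤ A + D * N := by gcongr
  · have hpow : (2 : ℝ) ^ Nat.size G ≤ 2 * G + 1 := by exact_mod_cast Nat.two_pow_size_le G
    have := hN (Nat.size G) (by omega)
    nlinarith [mul_le_mul_of_nonneg_left hS hB]

namespace IsGeodesicFrom

variable {X : Type*} [MetricSpace X] {γ : ℝ → X} {x y p : X}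

theorem dist_eq (h : IsGeodesicFrom γ x y) {s t : ℝ} (hs : s ∈ Icc 0 (dist x y))
    (ht : t ∈ Icc 0 (dist x y)) : dist (γ s) (γ t) = |s - t| :=
  h.2.2 s hs t ht

theorem reverse (h : IsGeodesicFrom γ x y) : IsGeodesicFrom (fun t => γ (dist x y - t)) y x := by
  rw [IsGeodesicFrom, dist_comm y x]
  refine ⟨by simpa using h.2.1, by simpa using h.1, fun s hs t ht => ?_⟩
  rw [h.dist_eq ⟨by linarith [hs.2], by linarith [hs.1]⟩ ⟨by linarith [ht.2], by linarith [ht.1]⟩,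
    abs_sub_comm]
  ring_nf

theorem mem_geodSeg_reverse (hp : p ∈ geodSeg γ x y) :
    p ∈ geodSeg (fun t => γ (dist x y - t)) y x := by
  obtain ⟨s, hs, rfl⟩ := hp
  rw [geodSeg, dist_comm y x]
  exact ⟨dist x y - s, ⟨by linarith [hs.2], by linarith [hs.1]⟩, by simp⟩

theorem dist_left_le (h : IsGeodesicFrom γ x y) (hp : p ∈ geodSeg γ x y) : dist x p ≤ dist x y := by
  obtain ⟨s, hs, rfl⟩ := hp
  have h0s := h.dist_eq ⟨le_rfl, dist_nonneg⟩ hs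
  rw [h.1, zero_sub, abs_neg, abs_of_nonneg hs.1] at h0s
  rw [h0s]
  exact hs.2

theorem dist_right_le (h : IsGeodesicFrom γ x y) (hp : p ∈ geodSeg γ x y) :
    dist p y ≤ dist x y := by
  rw [dist_comm p, dist_comm x]
  exact h.reverse.dist_left_le (mem_geodSeg_reverse hp)

theorem restrict (h : IsGeodesicFrom γ x y) {a b : ℝ} (ha : a ∈ Icc 0 (dist x y))
    (hb : b ∈ Icc 0 (dist x y)) (hab : a ≤ b) :
    IsGeodesicFrom (fun r => γ (a + r)) (γ a) (γ b) := by
  have hab' : dist (γ a) (γ b) = b - a := by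
    rw [h.dist_eq ha hb, abs_sub_comm, abs_of_nonneg (sub_nonneg.2 hab)]
  refine ⟨by simp, by simp [hab'], fun s hs t ht => ?_⟩
  rw [hab'] at hs ht
  rw [h.dist_eq ⟨by linarith [ha.1, hs.1], by linarith [hb.2, hs.2]⟩
    ⟨by linarith [ha.1, ht.1], by linarith [hb.2, ht.2]⟩, add_sub_add_left_eq_sub]

theorem mem_geodSeg_restrict (h : IsGeodesicFrom γ x y) {a b t : ℝ} (ha : a ∈ Icc 0 (dist x y))
    (hb : b ∈ Icc 0 (dist x y)) (hat : a ≤ t) (htb : t ≤ b) :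
    γ t ∈ geodSeg (fun r => γ (a + r)) (γ a) (γ b) := by
  refine ⟨t - a, ?_, by simp⟩
  rw [h.dist_eq ha hb, abs_sub_comm, abs_of_nonneg (by linarith)]
  exact ⟨by linarith, by linarith⟩

theorem lipschitzOnWith (h : IsGeodesicFrom γ x y) : LipschitzOnWith 1 γ (Icc 0 (dist x y)) :=
  LipschitzOnWith.of_dist_le_mul fun s hs t ht => by
    rw [h.dist_eq hs ht, NNReal.coe_one, one_mul, Real.dist_eq]

theorem exists_isMaxOn_infDist (h : IsGeodesicFrom γ x y) (U : Set X) :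
    ∃ t ∈ Icc 0 (dist x y), IsMaxOn (fun s => infDist (γ s) U) (Icc 0 (dist x y)) t :=
  isCompact_Icc.exists_isMaxOn (nonempty_Icc.2 dist_nonneg)
    ((continuous_infDist_pt U).comp_continuousOn h.lipschitzOnWith.continuousOn)

end IsGeodesicFrom

section Hyperbolic

variable {Υ : Type*} [MetricSpace Υ] {δ : ℝ}

theorem exists_mem_near_of_infDist_le {U : Set Υ} {z w : Υ} {r : ℝ} (hU : U.Nonempty)
    (hw : infDist w U ≤ infDist z U) (hr : 2 * r + 1 < infDist z U)
    (hzw : dist z w = 2 * infDist z U ∨ w ∈ U) :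
    ∃ w' ∈ U, dist w w' ≤ infDist z U + 1 ∧ dist w w' + 2 * r < dist z w := by
  rcases hzw with hzw | hwU
  · obtain ⟨w', hw', hww'⟩ := (infDist_lt_iff hU).1 (hw.trans_lt (lt_add_one _))
    exact ⟨w', hw', hww'.le, by linarith⟩
  · have hz : infDist z U ≤ dist z w := infDist_le_dist_of_mem hwU
    exact ⟨w, hwU, by rw [dist_self]; linarith [infDist_nonneg (x := z) (s := U)], by
      rw [dist_self]; linarith⟩

theorem DeltaHyperbolic.quadrilateral_thin (hgeo : GeodesicSpace Υ)
    (hhyp : DeltaHyperbolic Υ δ) {γ : ℝ → Υ} {u v p : Υ} (hγ : IsGeodesicFrom γ u v)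
    (hp : p ∈ geodSeg γ u v) (x y : Υ) :
    dist u p ≤ dist u x + δ ∨ dist p v ≤ dist y v + 2 * δ ∨
      ∃ μ, IsGeodesicFrom μ x y ∧ ∃ q ∈ geodSeg μ x y, dist p q ≤ 2 * δ := by
  obtain ⟨α, hα⟩ := hgeo u x
  obtain ⟨β, hβ⟩ := hgeo x v
  obtain ⟨μ, hμ⟩ := hgeo x y
  obtain ⟨ν, hν⟩ := hgeo y v
  obtain ⟨q₁, hq₁ | hq₁, hpq₁⟩ := hhyp u x v α β γ hα hβ hγ p hp
  · left
    linarith [dist_triangle u q₁ p, dist_comm p q₁, hα.dist_left_le hq₁]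
  obtain ⟨q₂, hq₂ | hq₂, hq₁q₂⟩ := hhyp x y v μ ν β hμ hν hβ q₁ hq₁
  · exact .inr <| .inr ⟨μ, hμ, q₂, hq₂, by linarith [dist_triangle p q₁ q₂]⟩
  · exact .inr <| .inl <| by
      linarith [dist_triangle p q₁ q₂, dist_triangle p q₂ v, hν.dist_right_le hq₂]

theorem DeltaHyperbolic.exists_geodesic_near_of_isMaxOn_infDist (hgeo : GeodesicSpace Υ)
    (hhyp : DeltaHyperbolic Υ δ) (hδ : 0 ≤ δ) {U : Set Υ} {γ : ℝ → Υ} {x y : Υ}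
    (hγ : IsGeodesicFrom γ x y) (hx : x ∈ U) (hy : y ∈ U) {t : ℝ} (ht : t ∈ Icc 0 (dist x y))
    (hmax : IsMaxOn (fun s => infDist (γ s) U) (Icc 0 (dist x y)) t)
    (hS : 2 * δ + 1 < infDist (γ t) U) :
    ∃ x' ∈ U, ∃ y' ∈ U, dist x' y' ≤ 6 * infDist (γ t) U + 2 ∧
      ∃ μ, IsGeodesicFrom μ x' y' ∧ ∃ q ∈ geodSeg μ x' y', dist (γ t) q ≤ 2 * δ := by
  set S := infDist (γ t) U
  set d := dist x y
  have hmax' := isMaxOn_iff.1 hmax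
  set a := max 0 (t - 2 * S)
  set b := min d (t + 2 * S)
  have hat : a ≤ t := max_le ht.1 (by linarith)
  have htb : t ≤ b := le_min ht.2 (by linarith)
  have ha : a ∈ Icc 0 d := ⟨le_max_left _ _, hat.trans ht.2⟩
  have hb : b ∈ Icc 0 d := ⟨ht.1.trans htb, min_le_left _ _⟩
  have hta : dist (γ t) (γ a) = t - a := by
    rw [hγ.dist_eq ht ha, abs_of_nonneg (sub_nonneg.2 hat)]
  have htb' : dist (γ t) (γ b) = b - t := by
    rw [hγ.dist_eq ht hb, abs_sub_comm, abs_of_nonneg (sub_nonneg.2 htb)]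
  obtain ⟨x', hx', hax', hfar_a⟩ := exists_mem_near_of_infDist_le ⟨x, hx⟩ (hmax' a ha) hS <| by
    rcases le_total 0 (t - 2 * S) with h | h
    · left; rw [hta, show a = t - 2 * S from max_eq_right h]; ring
    · right; rw [show a = 0 from max_eq_left h, hγ.1]; exact hx
  obtain ⟨y', hy', hby', hfar_b⟩ := exists_mem_near_of_infDist_le ⟨x, hx⟩ (hmax' b hb) hS <| by
    rcases le_total d (t + 2 * S) with h | h
    · right; rw [show b = d from min_eq_left h, hγ.2.1]; exact hy
    · left; rw [htb', show b = t + 2 * S from min_eq_right h]; ring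
  rcases hhyp.quadrilateral_thin hgeo (hγ.restrict ha hb (hat.trans htb))
    (hγ.mem_geodSeg_restrict ha hb hat htb) x' y' with h | h | ⟨μ, hμ, q, hq, hpq⟩
  · linarith [dist_comm (γ a) (γ t)]
  · linarith [dist_comm (γ b) y']
  · refine ⟨x', hx', y', hy', ?_, μ, hμ, q, hq, hpq⟩
    have hab : dist (γ a) (γ b) = b - a := by
      rw [hγ.dist_eq ha hb, abs_sub_comm, abs_of_nonneg (by linarith)]
    have : b - a ≤ 4 * S := by linarith [le_max_right 0 (t - 2 * S), min_le_right d (t + 2 * S)]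
    linarith [dist_triangle4 x' (γ a) (γ b) y', dist_comm x' (γ a)]

end Hyperbolic

def chainUnion {Υ : Type*} (Λ : ℕ∞) (Xs : ℕ → Set Υ) : Set Υ :=
  ⋃ i ∈ {i : ℕ | 1 ≤ i ∧ (i : ℕ∞) ≤ Λ}, Xs i

theorem mem_chainUnion {Υ : Type*} {Λ : ℕ∞} {Xs : ℕ → Set Υ} {x : Υ} :
    x ∈ chainUnion Λ Xs ↔ ∃ i : ℕ, (1 ≤ i ∧ (i : ℕ∞) ≤ Λ) ∧ x ∈ Xs i := by
  simp [chainUnion]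

section Chain

variable {Υ : Type*} [MetricSpace Υ] {δ ε : ℝ}

-- `Nat.size n = ⌊log₂ n⌋ + 1` (and `Nat.size 0 = 0`) is the depth of the bisection.
theorem DeltaHyperbolic.exists_near_of_chain (hgeo : GeodesicSpace Υ)
    (hhyp : DeltaHyperbolic Υ δ) (hδ : 0 ≤ δ) {Xs : ℕ → Set Υ} {i j : ℕ}
    (hX : ∀ k ∈ Icc i j, QuasiConvexSet ε (Xs k))
    (hcons : ∀ k, i ≤ k → k < j → (Xs k ∩ Xs (k + 1)).Nonempty) (hij : i ≤ j)
    {x y p : Υ} (hx : x ∈ Xs i) (hy : y ∈ Xs j) {γ : ℝ → Υ} (hγ : IsGeodesicFrom γ x y)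
    (hp : p ∈ geodSeg γ x y) :
    ∃ k ∈ Icc i j, ∃ q ∈ Xs k, dist p q ≤ ε + δ * Nat.size (j - i) := by
  induction hn : j - i using Nat.strong_induction_on generalizing i j x y p γ with
  | _ n ih =>
  rcases hij.eq_or_lt with rfl | hlt
  · obtain ⟨q, hq, hpq⟩ := hX i ⟨le_rfl, le_rfl⟩ x hx y hy γ hγ p hp
    rw [← hn, Nat.sub_self, Nat.size_zero, Nat.cast_zero, mul_zero, add_zero]
    exact ⟨i, ⟨le_rfl, le_rfl⟩, q, hq, hpq⟩
  obtain ⟨k, hk⟩ : ∃ k, k = i + n / 2 := ⟨_, rfl⟩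
  obtain ⟨z, hzk, hzk'⟩ := hcons k (by omega) (by omega)
  obtain ⟨α, hα⟩ := hgeo x z
  obtain ⟨β, hβ⟩ := hgeo z y
  obtain ⟨q₁, hq₁, hpq₁⟩ := hhyp x z y α β γ hα hβ hγ p hp
  have half : ∀ i' j' : ℕ, i ≤ i' → j' ≤ j → j' - i' ≤ n / 2 →
      (∃ l ∈ Icc i' j', ∃ q ∈ Xs l, dist q₁ q ≤ ε + δ * Nat.size (j' - i')) →
      ∃ l ∈ Icc i j, ∃ q ∈ Xs l, dist p q ≤ ε + δ * Nat.size n := by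
    rintro i' j' hi' hj' hlen ⟨l, ⟨hil, hlj⟩, q, hq, hq₁q⟩
    have hsize : (Nat.size (j' - i') : ℝ) + 1 ≤ Nat.size n := by
      exact_mod_cast (Nat.size_le_size hlen).trans_lt (Nat.size_div_two_lt (by omega))
    refine ⟨l, ⟨by omega, by omega⟩, q, hq, ?_⟩
    calc dist p q ≤ dist p q₁ + dist q₁ q := dist_triangle _ _ _
      _ ≤ ε + δ * (Nat.size (j' - i') + 1) := by linarith
      _ ≤ ε + δ * Nat.size n := by gcongr
  rcases hq₁ with hq₁ | hq₁
  · have := ih (k - i) (by omega) (i := i) (j := k)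
        (fun l hl => hX l ⟨hl.1, hl.2.trans (by omega)⟩) (fun l hil hlk => hcons l hil (by omega))
        (by omega) hx hzk hα hq₁ rfl
    exact half i k le_rfl (by omega) (by omega) this
  · have := ih (j - (k + 1)) (by omega) (i := k + 1) (j := j)
        (fun l hl => hX l ⟨le_trans (by omega) hl.1, hl.2⟩)
        (fun l hkl hlj => hcons l (by omega) hlj)
        (by omega) hzk' hy hβ hq₁ rfl
    exact half (k + 1) j (by omega) le_rfl (by omega) this

variable {Λ : ℕ∞} {Xs : ℕ → Set Υ}

theorem DeltaHyperbolic.exists_near_chainUnion_of_le (hgeo : GeodesicSpace Υ)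
    (hhyp : DeltaHyperbolic Υ δ) (hδ : 0 ≤ δ)
    (hX : ∀ i : ℕ, 1 ≤ i → (i : ℕ∞) ≤ Λ → QuasiConvexSet ε (Xs i))
    (hcons : ∀ i : ℕ, 1 ≤ i → ((i + 1 : ℕ) : ℕ∞) ≤ Λ → (Xs i ∩ Xs (i + 1)).Nonempty)
    {i j : ℕ} (hi : 1 ≤ i) (hij : i ≤ j) (hj : (j : ℕ∞) ≤ Λ) {x y p : Υ} (hx : x ∈ Xs i)
    (hy : y ∈ Xs j) {γ : ℝ → Υ} (hγ : IsGeodesicFrom γ x y) (hp : p ∈ geodSeg γ x y) :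
    ∃ q ∈ chainUnion Λ Xs, dist p q ≤ ε + δ * Nat.size (j - i) := by
  have hle : ∀ k, k ≤ j → (k : ℕ∞) ≤ Λ := fun k hk => (Nat.cast_le.2 hk).trans hj
  obtain ⟨k, hk, q, hq, hpq⟩ := hhyp.exists_near_of_chain hgeo hδ
    (fun k hk => hX k (hi.trans hk.1) (hle k hk.2))
    (fun k hik hkj => hcons k (hi.trans hik) (hle _ hkj)) hij hx hy hγ hp
  exact ⟨q, mem_chainUnion.2 ⟨k, ⟨hi.trans hk.1, hle k hk.2⟩, hq⟩, hpq⟩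

theorem DeltaHyperbolic.exists_near_chainUnion (hgeo : GeodesicSpace Υ)
    (hhyp : DeltaHyperbolic Υ δ) (hδ : 0 ≤ δ) {m c : ℝ}
    (hX : ∀ i : ℕ, 1 ≤ i → (i : ℕ∞) ≤ Λ → QuasiConvexSet ε (Xs i))
    (hcons : ∀ i : ℕ, 1 ≤ i → ((i + 1 : ℕ) : ℕ∞) ≤ Λ → (Xs i ∩ Xs (i + 1)).Nonempty)
    (hprog : ∀ i j : ℕ, 1 ≤ i → (i : ℕ∞) ≤ Λ → 1 ≤ j → (j : ℕ∞) ≤ Λ →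
      ∀ x ∈ Xs i, ∀ y ∈ Xs j, m * (|(i : ℝ) - (j : ℝ)| - c) ≤ dist x y)
    {x y p : Υ} (hx : x ∈ chainUnion Λ Xs) (hy : y ∈ chainUnion Λ Xs) {γ : ℝ → Υ}
    (hγ : IsGeodesicFrom γ x y) (hp : p ∈ geodSeg γ x y) :
    ∃ G : ℕ, m * (G - c) ≤ dist x y ∧
      ∃ q ∈ chainUnion Λ Xs, dist p q ≤ ε + δ * Nat.size G := by
  obtain ⟨i, ⟨hi, hiΛ⟩, hxi⟩ := mem_chainUnion.1 hx
  obtain ⟨j, ⟨hj, hjΛ⟩, hyj⟩ := mem_chainUnion.1 hy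
  have hxy := hprog i j hi hiΛ hj hjΛ x hxi y hyj
  rcases le_total i j with hij | hji
  · refine ⟨j - i, ?_, hhyp.exists_near_chainUnion_of_le hgeo hδ hX hcons hi hij hjΛ hxi hyj hγ hp⟩
    rwa [Nat.cast_sub hij, ← abs_of_nonneg (sub_nonneg.2 (Nat.cast_le.2 hij)), abs_sub_comm]
  · refine ⟨i - j, ?_, hhyp.exists_near_chainUnion_of_le hgeo hδ hX hcons hj hji hiΛ hyj hxi
      hγ.reverse (IsGeodesicFrom.mem_geodSeg_reverse hp)⟩
    rwa [Nat.cast_sub hji, ← abs_of_nonneg (sub_nonneg.2 (Nat.cast_le.2 hji))]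

end Chain

theorem union_of_progressing_chain_quasiconvex_general
    {Υ : Type*} [MetricSpace Υ] (δ m ε c : ℝ)
    (hδ : 0 ≤ δ) (hm : 0 < m)
    (hgeo : GeodesicSpace Υ) (hhyp : DeltaHyperbolic Υ δ) :
    ∃ ε' : ℝ, ∀ (Λ : ℕ∞) (Xs : ℕ → Set Υ),
      (∀ i : ℕ, 1 ≤ i → (i : ℕ∞) ≤ Λ → QuasiConvexSet ε (Xs i)) →
      (∀ i : ℕ, 1 ≤ i → ((i + 1 : ℕ) : ℕ∞) ≤ Λ → (Xs i ∩ Xs (i + 1)).Nonempty) →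
      (∀ i j : ℕ, 1 ≤ i → (i : ℕ∞) ≤ Λ → 1 ≤ j → (j : ℕ∞) ≤ Λ →
        ∀ x ∈ Xs i, ∀ y ∈ Xs j, m * (|(i : ℝ) - (j : ℝ)| - c) ≤ dist x y) →
      QuasiConvexSet ε' (⋃ i ∈ {i : ℕ | 1 ≤ i ∧ (i : ℕ∞) ≤ Λ}, Xs i) := by
  obtain ⟨K, hK⟩ := exists_bound_of_le_add_mul_size (A := 2 * δ + ε) (B := 6 / m)
    (C := 2 / m + c) (by positivity) hδ
  -- The `+ 1` is needed because `infDist` to the union need not be attained.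
  refine ⟨max (2 * δ + 1) K + 1, fun Λ Xs hX hcons hprog x hx y hy γ hγ p hp => ?_⟩
  change x ∈ chainUnion Λ Xs at hx
  change y ∈ chainUnion Λ Xs at hy
  obtain ⟨t, ht, hmax⟩ := hγ.exists_isMaxOn_infDist (chainUnion Λ Xs)
  have hS : infDist (γ t) (chainUnion Λ Xs) ≤ max (2 * δ + 1) K := by
    refine le_max_iff.2 (or_iff_not_imp_left.2 fun hS => ?_)
    obtain ⟨x', hx', y', hy', hx'y', μ, hμ, q, hq, hpq⟩ :=
      hhyp.exists_geodesic_near_of_isMaxOn_infDist hgeo hδ hγ hx hy ht hmax (not_le.1 hS)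
    obtain ⟨G, hG, q', hq', hqq'⟩ :=
      hhyp.exists_near_chainUnion hgeo hδ hX hcons hprog hx' hy' hμ hq
    refine hK _ G ?_ ?_
    · have := (le_div_iff₀' hm).2 (hG.trans hx'y')
      linarith [show (6 * infDist (γ t) (chainUnion Λ Xs) + 2) / m
        = 6 / m * infDist (γ t) (chainUnion Λ Xs) + 2 / m by ring]
    · linarith [infDist_le_dist_of_mem (x := γ t) hq', dist_triangle (γ t) q q']
  obtain ⟨s, hs, rfl⟩ := hp
  obtain ⟨q, hq, hpq⟩ := (infDist_lt_iff ⟨x, hx⟩).1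
    (((isMaxOn_iff.1 hmax) s hs).trans_lt (hS.trans_lt (lt_add_one _)))
  exact ⟨q, hq, hpq.le⟩

/-- In a `δ`-hyperbolic geodesic space, there is `ε'` (depending only on `δ, m, ε, c`) so that
any finite or countably infinite chain `X₁, …, X_Λ` of `ε`-quasi-convex sets, with consecutive
sets intersecting and satisfying the linear progress condition
`d(x,y) ≥ m(|i − j| − c)` for `x ∈ X_i`, `y ∈ X_j`, has `ε'`-quasi-convex union. -/
theorem union_of_progressing_chain_quasiconvex
    {Υ : Type*} [MetricSpace Υ] (δ m ε c : ℝ)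
    (hδ : 0 ≤ δ) (hm : 0 < m) (hε : 0 < ε) (hc : 0 ≤ c)
    (hgeo : GeodesicSpace Υ) (hhyp : DeltaHyperbolic Υ δ) :
    ∃ ε' : ℝ, ∀ (Λ : ℕ∞) (Xs : ℕ → Set Υ),
      (∀ i : ℕ, 1 ≤ i → (i : ℕ∞) ≤ Λ → QuasiConvexSet ε (Xs i)) →
      (∀ i : ℕ, 1 ≤ i → ((i + 1 : ℕ) : ℕ∞) ≤ Λ → (Xs i ∩ Xs (i + 1)).Nonempty) →
      (∀ i j : ℕ, 1 ≤ i → (i : ℕ∞) ≤ Λ → 1 ≤ j → (j : ℕ∞) ≤ Λ →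
        ∀ x ∈ Xs i, ∀ y ∈ Xs j, m * (|(i : ℝ) - (j : ℝ)| - c) ≤ dist x y) →
      QuasiConvexSet ε' (⋃ i ∈ {i : ℕ | 1 ≤ i ∧ (i : ℕ∞) ≤ Λ}, Xs i) :=
  union_of_progressing_chain_quasiconvex_general δ m ε c hδ hm hgeo hhyp
end
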